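/- arXiv:2404.00540 — 3 statements merged into one kernel-verified Lean document; each statement's English description precedes it below -/
import Mathlib

section
/- Barber–Agakov variational lower bound on mutual information: let (Ω, μ) be a probability space and let X : Ω → T, Y : Ω → S be measurable random variables taking values in finite types equipped with the discrete σ-algebra. Let q : T → S → ℝ satisfy q t s ≥ 0 for all t, s, Σ_{s∈S} q t s = 1 for every t ∈ T, and q t s > 0 whenever P(X=t, Y=s) > 0. Then I(X ; Y) ≥ H(Y) + Σ_{(t,s)∈T×S} P(X=t, Y=s) · log (q t s), where terms with P(X=t, Y=s) = 0 are omitted. -/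
open MeasureTheory ProbabilityTheory

/-- Shannon entropy (natural log) of a random variable `X` with values in a finite type,
with the convention `0 * log 0 = 0` (since `Real.log 0 = 0`). -/
noncomputable def entropy {Ω S : Type*} [MeasurableSpace Ω] [Fintype S]
    (μ : Measure Ω) (X : Ω → S) : ℝ :=
  -∑ s : S, (μ (X ⁻¹' {s})).toReal * Real.log (μ (X ⁻¹' {s})).toReal

/-- Conditional entropy `H(Y | B) = Σ_b P(B=b) * H(Y ; μ(·|B=b))`. -/
noncomputable def condEntropy {Ω S T : Type*} [MeasurableSpace Ω] [Fintype S] [Fintype T]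
    (μ : Measure Ω) (Y : Ω → S) (B : Ω → T) : ℝ :=
  ∑ t : T, (μ (B ⁻¹' {t})).toReal * entropy (ProbabilityTheory.cond μ (B ⁻¹' {t})) Y

/-- Mutual information `I(X;Y) = H(X) + H(Y) - H(⟨X,Y⟩)`. -/
noncomputable def mutualInfo {Ω T S : Type*} [MeasurableSpace Ω] [Fintype T] [Fintype S]
    (μ : Measure Ω) (X : Ω → T) (Y : Ω → S) : ℝ :=
  entropy μ X + entropy μ Y - entropy μ (fun ω => (X ω, Y ω))

/-- Conditional mutual information `I(O;Y|B) = Σ_b P(B=b) * I(O;Y ; μ(·|B=b))`. -/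
noncomputable def condMutualInfo {Ω U S T : Type*} [MeasurableSpace Ω]
    [Fintype U] [Fintype S] [Fintype T]
    (μ : Measure Ω) (O : Ω → U) (Y : Ω → S) (B : Ω → T) : ℝ :=
  ∑ t : T, (μ (B ⁻¹' {t})).toReal * mutualInfo (ProbabilityTheory.cond μ (B ⁻¹' {t})) O Y

/-!
For each value `t` of `X`, Gibbs' inequality compares the conditional law `P(Y = · | X = t)` with
the variational distribution `q t ·`: the cross entropy `-Σ_s P(X=t, Y=s) log q t s` dominates
`P(X=t) · H(Y | X = t)`. Summing over `t` gives `H(Y | X) ≤ -Σ P(X=t, Y=s) log q t s`, and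
`I(X;Y) = H(Y) - H(Y | X)` with `H(Y | X) = H(X,Y) - H(X)`.
-/

open Real

lemma mul_log_le_mul_log_add_sub {a b : ℝ} (ha : 0 ≤ a) (hb : 0 ≤ b) (hab : 0 < a → 0 < b) :
    a * log b ≤ a * log a + (b - a) := by
  rcases ha.eq_or_lt with rfl | ha
  · simpa using hb
  have hb := hab ha
  calc a * log b = a * log (b / a) + a * log a := by
        rw [log_div hb.ne' ha.ne']; ring
    _ ≤ a * (b / a - 1) + a * log a := by
        gcongr; exact log_le_sub_one_of_pos (div_pos hb ha)
    _ = a * log a + (b - a) := by field_simp; ring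

/-- Gibbs' inequality for an unnormalised `a` against a sub-probability vector `q`. -/
lemma Finset.sum_mul_log_le_sum_mul_log_sub {ι : Type*} (s : Finset ι) (a q : ι → ℝ)
    (ha : ∀ i ∈ s, 0 ≤ a i) (hq : ∀ i ∈ s, 0 ≤ q i) (hq1 : ∑ i ∈ s, q i ≤ 1)
    (hpos : ∀ i ∈ s, 0 < a i → 0 < q i) :
    ∑ i ∈ s, a i * log (q i) ≤ ∑ i ∈ s, a i * log (a i) - (∑ i ∈ s, a i) * log (∑ i ∈ s, a i) := by
  set A := ∑ i ∈ s, a i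
  have hA0 : 0 ≤ A := Finset.sum_nonneg ha
  rcases hA0.eq_or_lt with hA | hA
  · have hzero : ∀ i ∈ s, a i = 0 := (Finset.sum_eq_zero_iff_of_nonneg ha).mp hA.symm
    have hlogq : ∑ i ∈ s, a i * log (q i) = 0 := Finset.sum_eq_zero fun i hi => by simp [hzero i hi]
    have hloga : ∑ i ∈ s, a i * log (a i) = 0 := Finset.sum_eq_zero fun i hi => by simp [hzero i hi]
    simp [hlogq, hloga, ← hA]
  -- compare `a` with `A • q`, whose total mass is at most that of `a`
  have hterm : ∀ i ∈ s, a i * log (q i) + a i * log A ≤ a i * log (a i) + (q i * A - a i) := by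
    intro i hi
    rcases (ha i hi).eq_or_lt with hai | hai
    · simp [← hai, mul_nonneg (hq i hi) hA.le]
    rw [← mul_add, ← log_mul (hpos i hi hai).ne' hA.ne']
    exact mul_log_le_mul_log_add_sub (ha i hi) (mul_nonneg (hq i hi) hA.le) fun _ =>
      mul_pos (hpos i hi hai) hA
  have hsum := Finset.sum_le_sum hterm
  rw [Finset.sum_add_distrib, Finset.sum_add_distrib, Finset.sum_sub_distrib, ← Finset.sum_mul,
    ← Finset.sum_mul] at hsum
  have hmass : (∑ i ∈ s, q i) * A ≤ A := mul_le_of_le_one_left hA.le hq1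
  linarith

lemma measureReal_eq_sum_measureReal_inter_preimage {Ω S : Type*} [MeasurableSpace Ω]
    [Fintype S] [MeasurableSpace S] [MeasurableSingletonClass S] (μ : Measure Ω)
    [IsFiniteMeasure μ] {Y : Ω → S} (hY : Measurable Y) (A : Set Ω) :
    μ.real A = ∑ s, μ.real (A ∩ Y ⁻¹' {s}) := by
  have := sum_measureReal_preimage_singleton (μ := μ.restrict A) Finset.univ
    fun s _ => hY (measurableSet_singleton s)
  simp_rw [measureReal_restrict_apply (hY (measurableSet_singleton _)), Set.inter_comm] at this
  simpa using this.symm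

lemma entropy_prod {Ω T S : Type*} [MeasurableSpace Ω] [Fintype T] [Fintype S]
    (μ : Measure Ω) (X : Ω → T) (Y : Ω → S) :
    entropy μ (fun ω => (X ω, Y ω)) =
      -∑ t, ∑ s, μ.real (X ⁻¹' {t} ∩ Y ⁻¹' {s}) * log (μ.real (X ⁻¹' {t} ∩ Y ⁻¹' {s})) := by
  have hfiber : ∀ t s, (fun ω => (X ω, Y ω)) ⁻¹' {(t, s)} = X ⁻¹' {t} ∩ Y ⁻¹' {s} := by
    intro t s; ext ω; simp [Prod.ext_iff]
  simp only [entropy, Fintype.sum_prod_type, hfiber, measureReal_def]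

lemma entropy_prod_sub_entropy_le {Ω T S : Type*} [MeasurableSpace Ω] [Fintype T]
    [Fintype S] [MeasurableSpace S] [MeasurableSingletonClass S] (μ : Measure Ω)
    [IsFiniteMeasure μ] (X : Ω → T) {Y : Ω → S} (hY : Measurable Y) (q : T → S → ℝ)
    (hq0 : ∀ t s, 0 ≤ q t s) (hq1 : ∀ t, ∑ s, q t s ≤ 1)
    (hqpos : ∀ t s, 0 < μ.real (X ⁻¹' {t} ∩ Y ⁻¹' {s}) → 0 < q t s) :
    entropy μ (fun ω => (X ω, Y ω)) - entropy μ X ≤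
      -∑ x : T × S, μ.real (X ⁻¹' {x.1} ∩ Y ⁻¹' {x.2}) * log (q x.1 x.2) := by
  have hfiber : ∀ t, ∑ s, μ.real (X ⁻¹' {t} ∩ Y ⁻¹' {s}) * log (q t s) ≤
      ∑ s, μ.real (X ⁻¹' {t} ∩ Y ⁻¹' {s}) * log (μ.real (X ⁻¹' {t} ∩ Y ⁻¹' {s})) -
        μ.real (X ⁻¹' {t}) * log (μ.real (X ⁻¹' {t})) := by
    intro t
    rw [measureReal_eq_sum_measureReal_inter_preimage μ hY]
    exact Finset.sum_mul_log_le_sum_mul_log_sub _ _ _ (fun _ _ => measureReal_nonneg)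
      (fun s _ => hq0 t s) (hq1 t) fun s _ => hqpos t s
  have hsum := Finset.sum_le_sum fun t (_ : t ∈ Finset.univ) => hfiber t
  rw [Finset.sum_sub_distrib] at hsum
  rw [entropy_prod, entropy, Fintype.sum_prod_type]
  simp only [← measureReal_def]
  linarith

theorem barber_agakov_lower_bound_general
    {Ω T S : Type*} [MeasurableSpace Ω]
    [Fintype T]
    [Fintype S] [MeasurableSpace S] [DiscreteMeasurableSpace S]
    (μ : Measure Ω) [IsProbabilityMeasure μ]
    (X : Ω → T) (Y : Ω → S)
    (hY : Measurable Y)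
    (q : T → S → ℝ)
    (hq0 : ∀ t s, 0 ≤ q t s)
    (hq1 : ∀ t, ∑ s : S, q t s = 1)
    (hqpos : ∀ t s, 0 < (μ (X ⁻¹' {t} ∩ Y ⁻¹' {s})).toReal → 0 < q t s) :
    mutualInfo μ X Y ≥
      entropy μ Y +
        ∑ x : T × S,
          (μ (X ⁻¹' {x.1} ∩ Y ⁻¹' {x.2})).toReal * Real.log (q x.1 x.2) := by
  have := entropy_prod_sub_entropy_le μ X hY q hq0 (fun t => (hq1 t).le) hqpos
  simp only [measureReal_def] at this
  unfold mutualInfo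
  linarith

/-- Barber–Agakov variational lower bound on mutual information. -/
theorem barber_agakov_lower_bound
    {Ω T S : Type*} [MeasurableSpace Ω]
    [Fintype T] [MeasurableSpace T] [DiscreteMeasurableSpace T]
    [Fintype S] [MeasurableSpace S] [DiscreteMeasurableSpace S]
    (μ : Measure Ω) [IsProbabilityMeasure μ]
    (X : Ω → T) (Y : Ω → S)
    (hX : Measurable X) (hY : Measurable Y)
    (q : T → S → ℝ)
    (hq0 : ∀ t s, 0 ≤ q t s)
    (hq1 : ∀ t, ∑ s : S, q t s = 1)
    (hqpos : ∀ t s, 0 < (μ (X ⁻¹' {t} ∩ Y ⁻¹' {s})).toReal → 0 < q t s) :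
    mutualInfo μ X Y ≥
      entropy μ Y +
        ∑ x : T × S,
          (μ (X ⁻¹' {x.1} ∩ Y ⁻¹' {x.2})).toReal * Real.log (q x.1 x.2) :=
  barber_agakov_lower_bound_general μ X Y hY q hq0 hq1 hqpos
end

section
/- Exact decomposition of the Barber–Agakov gap: let (Ω, μ) be a probability space and let Y : Ω → S, B : Ω → T, O : Ω → U be measurable random variables taking values in finite types equipped with the discrete σ-algebra. Let q : T → U → S → ℝ satisfy q t u s ≥ 0 for all t, u, s, Σ_{s∈S} q t u s = 1 for every (t,u) ∈ T×U, and q t u s > 0 whenever P(B=t, O=u, Y=s) > 0. Then I(O ; Y | B) = H(Y | B) + Σ_{(t,u,s)} P(B=t, O=u, Y=s) · log (q t u s) + Σ_{(t,u): P(B=t,O=u)>0} P(B=t, O=u) · D_KL( P(Y = · | B=t, O=u) ‖ q t u · ). In particular, the slack in the conditional Barber–Agakov bound is exactly the expected Kullback–Leibler divergence between the true conditional distribution of Y given (B,O) and the variational distribution q. -/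
open MeasureTheory ProbabilityTheory

/-- Kullback–Leibler divergence between two finitely supported probability mass functions,
with the convention `0 * log(·) = 0`. -/
noncomputable def klDivFin {S : Type*} [Fintype S] (p q : S → ℝ) : ℝ :=
  ∑ s : S, p s * Real.log (p s / q s)

/-!
Under the conditional measure given `B = t` one has `I(O;Y) = H(Y) + Σ P(u,s) log P(s | u)`, so
weighting by `P(B = t)` gives `I(O;Y|B) = H(Y|B) + Σ P(t,u,s) log P(s | t,u)`. On the support,
`log P(s | t,u) = log q t u s + log (P(s | t,u) / q t u s)`, which splits this sum into the
Barber–Agakov term and the expected Kullback–Leibler divergence.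
-/

open Real

lemma cond_apply_toReal {Ω : Type*} [MeasurableSpace Ω] (μ : Measure Ω) {A : Set Ω}
    (hA : MeasurableSet A) (s : Set Ω) :
    (cond μ A s).toReal = (μ (A ∩ s)).toReal / (μ A).toReal := by
  rw [cond_apply hA, ENNReal.toReal_mul, ENNReal.toReal_inv, inv_mul_eq_div]

lemma sum_toReal_measure_inter_preimage_singleton {Ω S : Type*} [MeasurableSpace Ω]
    [Fintype S] [MeasurableSpace S] [DiscreteMeasurableSpace S] (μ : Measure Ω)
    [IsFiniteMeasure μ] {Y : Ω → S} (hY : Measurable Y) (A : Set Ω) :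
    ∑ s : S, (μ (A ∩ Y ⁻¹' {s})).toReal = (μ A).toReal := by
  have hrestrict : ∀ s, μ (A ∩ Y ⁻¹' {s}) = μ.restrict A (Y ⁻¹' {s}) := fun s => by
    rw [Measure.restrict_apply (hY (measurableSet_singleton s)), Set.inter_comm]
  simp only [hrestrict]
  rw [← ENNReal.toReal_sum fun s _ => measure_ne_top _ _,
    sum_measure_preimage_singleton _ fun s _ => hY (measurableSet_singleton s)]
  simp

lemma entropy_cond {Ω S : Type*} [MeasurableSpace Ω] [Fintype S] (μ : Measure Ω)
    {A : Set Ω} (hA : MeasurableSet A) (X : Ω → S) :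
    entropy (cond μ A) X = -∑ s : S, (μ (A ∩ X ⁻¹' {s})).toReal / (μ A).toReal *
      log ((μ (A ∩ X ⁻¹' {s})).toReal / (μ A).toReal) := by
  simp only [entropy, cond_apply_toReal μ hA]

lemma mul_neg_sum_div_mul_log_div {ι : Type*} [Fintype ι] {c : ℝ} (hc : c ≠ 0) (x : ι → ℝ) :
    c * -∑ i, x i / c * log (x i / c) = -∑ i, x i * log (x i / c) := by
  rw [mul_neg, Finset.mul_sum]
  congr 1
  refine Finset.sum_congr rfl fun i _ => ?_
  field_simp

lemma sum_mul_log_div_sub_sum_mul_log_div {U S : Type*} [Fintype U] [Fintype S] {c : ℝ}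
    (hc : 0 < c) (p : U → S → ℝ) (m : U → ℝ) (hp : ∀ u s, 0 ≤ p u s)
    (hm : ∀ u, ∑ s, p u s = m u) :
    ∑ x : U × S, p x.1 x.2 * log (p x.1 x.2 / c) - ∑ u, m u * log (m u / c) =
      ∑ x : U × S, p x.1 x.2 * log (p x.1 x.2 / m x.1) := by
  simp only [← hm, Finset.sum_mul, Fintype.sum_prod_type, ← Finset.sum_sub_distrib]
  refine Finset.sum_congr rfl fun u _ => Finset.sum_congr rfl fun s _ => ?_
  rcases (hp u s).eq_or_lt with hzero | hpos
  · simp [← hzero]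
  have hsum : 0 < ∑ s, p u s :=
    hpos.trans_le (Finset.single_le_sum (fun s _ => hp u s) (Finset.mem_univ s))
  rw [log_div hpos.ne' hc.ne', log_div hsum.ne' hc.ne', log_div hpos.ne' hsum.ne']
  ring

lemma toReal_mul_mutualInfo_cond {Ω U S : Type*} [MeasurableSpace Ω] [Fintype U] [Fintype S]
    [MeasurableSpace S] [DiscreteMeasurableSpace S] (μ : Measure Ω) [IsFiniteMeasure μ]
    {A : Set Ω} (hA : MeasurableSet A) (O : Ω → U) {Y : Ω → S} (hY : Measurable Y) :
    (μ A).toReal * mutualInfo (cond μ A) O Y =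
      (μ A).toReal * entropy (cond μ A) Y +
        ∑ x : U × S, (μ (A ∩ O ⁻¹' {x.1} ∩ Y ⁻¹' {x.2})).toReal *
          log ((μ (A ∩ O ⁻¹' {x.1} ∩ Y ⁻¹' {x.2})).toReal / (μ (A ∩ O ⁻¹' {x.1})).toReal) := by
  rcases eq_or_ne (μ A) 0 with hA0 | hA0
  · have hnull : ∀ x : U × S, μ (A ∩ O ⁻¹' {x.1} ∩ Y ⁻¹' {x.2}) = 0 := fun x =>
      measure_mono_null (fun ω hω => hω.1.1) hA0
    simp [hA0, hnull]
  have hc : 0 < (μ A).toReal := ENNReal.toReal_pos hA0 (measure_ne_top _ _)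
  have hpair : ∀ x : U × S, (fun ω => (O ω, Y ω)) ⁻¹' {x} = O ⁻¹' {x.1} ∩ Y ⁻¹' {x.2} :=
    fun x => by rw [← Set.mk_preimage_prod, Set.singleton_prod_singleton]
  rw [mutualInfo, entropy_cond μ hA O, entropy_cond μ hA fun ω => (O ω, Y ω), mul_sub, mul_add,
    mul_neg_sum_div_mul_log_div hc.ne', mul_neg_sum_div_mul_log_div hc.ne']
  simp only [hpair, ← Set.inter_assoc]
  linear_combination sum_mul_log_div_sub_sum_mul_log_div hc
    (fun u s => (μ (A ∩ O ⁻¹' {u} ∩ Y ⁻¹' {s})).toReal) (fun u => (μ (A ∩ O ⁻¹' {u})).toReal)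
    (fun _ _ => ENNReal.toReal_nonneg) fun u => sum_toReal_measure_inter_preimage_singleton μ hY _

lemma sum_mul_log_div_eq_sum_mul_log_add_klDivFin {S : Type*} [Fintype S] {p q : S → ℝ} {c : ℝ}
    (hp : ∀ s, 0 ≤ p s) (hq : ∀ s, 0 < p s → 0 < q s) (hc : ∑ s, p s = c) :
    ∑ s, p s * log (p s / c) =
      ∑ s, p s * log (q s) + if 0 < c then c * klDivFin (fun s => p s / c) q else 0 := by
  split_ifs with hc0
  · rw [klDivFin, Finset.mul_sum, ← Finset.sum_add_distrib]
    refine Finset.sum_congr rfl fun s _ => ?_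
    rcases (hp s).eq_or_lt with hps | hps
    · simp [← hps]
    have hcancel : c * (p s / c) = p s := by field_simp
    rw [← mul_assoc, hcancel, log_div (by positivity) (hq s hps).ne']
    ring
  · have hzero : ∀ s, p s = 0 := fun s =>
      (Finset.sum_eq_zero_iff_of_nonneg fun s _ => hp s).mp
        (le_antisymm (hc ▸ not_lt.mp hc0) (Finset.sum_nonneg fun s _ => hp s)) s (Finset.mem_univ s)
    simp [hzero]

open scoped Classical in
theorem conditional_barber_agakov_gap_general
    {Ω S T U : Type*} [MeasurableSpace Ω]
    [Fintype S] [MeasurableSpace S] [DiscreteMeasurableSpace S]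
    [Fintype T] [MeasurableSpace T] [DiscreteMeasurableSpace T]
    [Fintype U]
    (μ : Measure Ω) [IsProbabilityMeasure μ]
    (Y : Ω → S) (B : Ω → T) (O : Ω → U)
    (hY : Measurable Y) (hB : Measurable B)
    (q : T → U → S → ℝ)
    (hqpos : ∀ t u s,
      0 < (μ (B ⁻¹' {t} ∩ O ⁻¹' {u} ∩ Y ⁻¹' {s})).toReal → 0 < q t u s) :
    condMutualInfo μ O Y B =
      condEntropy μ Y B +
        (∑ x : T × U × S,
          (μ (B ⁻¹' {x.1} ∩ O ⁻¹' {x.2.1} ∩ Y ⁻¹' {x.2.2})).toReal *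
            Real.log (q x.1 x.2.1 x.2.2)) +
        ∑ tu ∈ Finset.univ.filter
            (fun tu : T × U => 0 < (μ (B ⁻¹' {tu.1} ∩ O ⁻¹' {tu.2})).toReal),
          (μ (B ⁻¹' {tu.1} ∩ O ⁻¹' {tu.2})).toReal *
            klDivFin
              (fun s => (μ (B ⁻¹' {tu.1} ∩ O ⁻¹' {tu.2} ∩ Y ⁻¹' {s})).toReal /
                (μ (B ⁻¹' {tu.1} ∩ O ⁻¹' {tu.2})).toReal)
              (q tu.1 tu.2) := by
  have hcond : condMutualInfo μ O Y B = condEntropy μ Y B +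
      ∑ x : T × U × S, (μ (B ⁻¹' {x.1} ∩ O ⁻¹' {x.2.1} ∩ Y ⁻¹' {x.2.2})).toReal *
        log ((μ (B ⁻¹' {x.1} ∩ O ⁻¹' {x.2.1} ∩ Y ⁻¹' {x.2.2})).toReal /
          (μ (B ⁻¹' {x.1} ∩ O ⁻¹' {x.2.1})).toReal) := by
    rw [condMutualInfo, condEntropy, Fintype.sum_prod_type, ← Finset.sum_add_distrib]
    exact Finset.sum_congr rfl fun t _ =>
      toReal_mul_mutualInfo_cond μ (hB (measurableSet_singleton t)) O hY
  rw [hcond, add_assoc, Finset.sum_filter]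
  congr 1
  simp only [Fintype.sum_prod_type, ← Finset.sum_add_distrib]
  exact Finset.sum_congr rfl fun t _ => Finset.sum_congr rfl fun u _ =>
    sum_mul_log_div_eq_sum_mul_log_add_klDivFin (fun s => ENNReal.toReal_nonneg)
      (hqpos t u) (sum_toReal_measure_inter_preimage_singleton μ hY _)

open scoped Classical in
/-- exact decomposition of the Barber–Agakov gap: the slack in the conditional
Barber–Agakov bound is exactly the expected KL divergence between the true conditional
distribution of `Y` given `(B,O)` and the variational distribution `q`. -/
theorem conditional_barber_agakov_gap
    {Ω S T U : Type*} [MeasurableSpace Ω]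
    [Fintype S] [MeasurableSpace S] [DiscreteMeasurableSpace S]
    [Fintype T] [MeasurableSpace T] [DiscreteMeasurableSpace T]
    [Fintype U] [MeasurableSpace U] [DiscreteMeasurableSpace U]
    (μ : Measure Ω) [IsProbabilityMeasure μ]
    (Y : Ω → S) (B : Ω → T) (O : Ω → U)
    (hY : Measurable Y) (hB : Measurable B) (hO : Measurable O)
    (q : T → U → S → ℝ)
    (hq0 : ∀ t u s, 0 ≤ q t u s)
    (hq1 : ∀ t u, ∑ s : S, q t u s = 1)
    (hqpos : ∀ t u s,
      0 < (μ (B ⁻¹' {t} ∩ O ⁻¹' {u} ∩ Y ⁻¹' {s})).toReal → 0 < q t u s) :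
    condMutualInfo μ O Y B =
      condEntropy μ Y B +
        (∑ x : T × U × S,
          (μ (B ⁻¹' {x.1} ∩ O ⁻¹' {x.2.1} ∩ Y ⁻¹' {x.2.2})).toReal *
            Real.log (q x.1 x.2.1 x.2.2)) +
        ∑ tu ∈ Finset.univ.filter
            (fun tu : T × U => 0 < (μ (B ⁻¹' {tu.1} ∩ O ⁻¹' {tu.2})).toReal),
          (μ (B ⁻¹' {tu.1} ∩ O ⁻¹' {tu.2})).toReal *
            klDivFin
              (fun s => (μ (B ⁻¹' {tu.1} ∩ O ⁻¹' {tu.2} ∩ Y ⁻¹' {s})).toReal /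
                (μ (B ⁻¹' {tu.1} ∩ O ⁻¹' {tu.2})).toReal)
              (q tu.1 tu.2) :=
  conditional_barber_agakov_gap_general μ Y B O hY hB q hqpos
end

section
/- Tractable unnormalized Barber–Agakov (TUBA) bound: let (Ω, μ) be a probability space and let Y : Ω → S, B : Ω → T, O : Ω → U be measurable random variables taking values in finite types equipped with the discrete σ-algebra. Let 𝓔 : T → U → S → ℝ be any critic function, for (t,u) with P(B=t) > 0 define the partition function Z(t,u) = Σ_{s∈S} P(Y=s | B=t) · exp(𝓔 t u s), and let a : T → U → ℝ satisfy a(t,u) > 0 for all (t,u). Then I(O ; Y | B) ≥ 1 + Σ_{(t,u,s)} P(B=t, O=u, Y=s) · (𝓔 t u s − log a(t,u)) − Σ_{(t,u): P(B=t,O=u)>0} P(B=t, O=u) · Z(t,u)/a(t,u). -/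
open MeasureTheory ProbabilityTheory

/-!
Conditioning on `B = t` reduces everything to a single probability measure `ν`, with joint law
`q` of `(O, Y)` and marginals `q_O`, `q_Y`. Since `I(O;Y) = Σ q log (q / (q_O q_Y))`, the
inequality `x + 1 ≤ exp x` at `x = 𝓔 - log Z - log (q / (q_O q_Y))` gives, after summation,
the unnormalized Barber–Agakov bound `I(O;Y) ≥ E[𝓔] - E_O[log Z]`: the reweighted product
`q_O q_Y exp 𝓔 / Z` has total mass one.
The tractable bound then follows from `log Z ≤ Z / a + log a - 1`. Multiplying the bound for
`ν = μ[|B = t]` by `P(B = t)` turns conditional masses into joint ones, and also makes events of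
probability zero contribute nothing on either side.
-/

open Real Finset

section Marginals

variable {Ω S : Type*} [MeasurableSpace Ω] [Fintype S]

lemma sum_measureReal_inter_preimage_singleton [MeasurableSpace S] [MeasurableSingletonClass S]
    (ν : Measure Ω) [IsFiniteMeasure ν] {Y : Ω → S} (hY : Measurable Y) (A : Set Ω) :
    ∑ s, ν.real (A ∩ Y ⁻¹' {s}) = ν.real A := by
  have h := sum_measureReal_preimage_singleton (μ := ν.restrict A) Finset.univ
    (fun s _ => hY (measurableSet_singleton s))
  simp only [coe_univ, Set.preimage_univ, measureReal_restrict_apply_univ,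
    measureReal_restrict_apply (hY (measurableSet_singleton _))] at h
  simpa only [Set.inter_comm A] using h

lemma sum_measureReal_preimage_singleton_eq_one [MeasurableSpace S] [MeasurableSingletonClass S]
    (ν : Measure Ω) [IsProbabilityMeasure ν] {Y : Ω → S} (hY : Measurable Y) :
    ∑ s, ν.real (Y ⁻¹' {s}) = 1 := by
  simpa using sum_measureReal_inter_preimage_singleton ν hY Set.univ

end Marginals

section Entropy

variable {Ω S U : Type*} [MeasurableSpace Ω] [Fintype S] [Fintype U]

lemma entropy_pair_eq_neg_sum_mul_log (ν : Measure Ω) (X : Ω → U) (Y : Ω → S) :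
    entropy ν (fun ω => (X ω, Y ω)) =
      -∑ u, ∑ s, ν.real (X ⁻¹' {u} ∩ Y ⁻¹' {s}) * log (ν.real (X ⁻¹' {u} ∩ Y ⁻¹' {s})) := by
  have hpre : ∀ p : U × S, (fun ω => (X ω, Y ω)) ⁻¹' {p} = X ⁻¹' {p.1} ∩ Y ⁻¹' {p.2} := by
    intro p; ext ω; simp [Prod.ext_iff]
  simp only [entropy, Fintype.sum_prod_type, hpre, measureReal_def]

lemma entropy_eq_neg_sum_inter_mul_log [MeasurableSpace S] [MeasurableSingletonClass S]
    (ν : Measure Ω) [IsFiniteMeasure ν] (X : Ω → U) {Y : Ω → S} (hY : Measurable Y) :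
    entropy ν X = -∑ u, ∑ s, ν.real (X ⁻¹' {u} ∩ Y ⁻¹' {s}) * log (ν.real (X ⁻¹' {u})) := by
  simp only [entropy, ← sum_mul, sum_measureReal_inter_preimage_singleton ν hY]
  rfl

lemma mutualInfo_eq_sum_mul_log_div [MeasurableSpace S] [MeasurableSingletonClass S]
    [MeasurableSpace U] [MeasurableSingletonClass U]
    (ν : Measure Ω) [IsFiniteMeasure ν] {X : Ω → U} {Y : Ω → S}
    (hX : Measurable X) (hY : Measurable Y) :
    mutualInfo ν X Y = ∑ u, ∑ s, ν.real (X ⁻¹' {u} ∩ Y ⁻¹' {s}) *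
      log (ν.real (X ⁻¹' {u} ∩ Y ⁻¹' {s}) / (ν.real (X ⁻¹' {u}) * ν.real (Y ⁻¹' {s}))) := by
  have hY' : entropy ν Y =
      -∑ u, ∑ s, ν.real (X ⁻¹' {u} ∩ Y ⁻¹' {s}) * log (ν.real (Y ⁻¹' {s})) := by
    rw [entropy_eq_neg_sum_inter_mul_log ν Y hX, sum_comm]
    simp only [Set.inter_comm]
  have hterm : ∀ u s, ν.real (X ⁻¹' {u} ∩ Y ⁻¹' {s}) *
      log (ν.real (X ⁻¹' {u} ∩ Y ⁻¹' {s}) / (ν.real (X ⁻¹' {u}) * ν.real (Y ⁻¹' {s}))) =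
      ν.real (X ⁻¹' {u} ∩ Y ⁻¹' {s}) * log (ν.real (X ⁻¹' {u} ∩ Y ⁻¹' {s})) -
        ν.real (X ⁻¹' {u} ∩ Y ⁻¹' {s}) * log (ν.real (X ⁻¹' {u})) -
        ν.real (X ⁻¹' {u} ∩ Y ⁻¹' {s}) * log (ν.real (Y ⁻¹' {s})) := by
    intro u s
    rcases (measureReal_nonneg (μ := ν) (s := X ⁻¹' {u} ∩ Y ⁻¹' {s})).eq_or_lt with h | h
    · simp [← h]
    · have hXu : 0 < ν.real (X ⁻¹' {u}) := h.trans_le (measureReal_mono Set.inter_subset_left)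
      have hYs : 0 < ν.real (Y ⁻¹' {s}) := h.trans_le (measureReal_mono Set.inter_subset_right)
      rw [log_div h.ne' (by positivity), log_mul hXu.ne' hYs.ne']
      ring
  rw [mutualInfo, entropy_eq_neg_sum_inter_mul_log ν X hY, hY', entropy_pair_eq_neg_sum_mul_log]
  simp only [hterm, sum_sub_distrib]
  ring

end Entropy

lemma mul_add_one_sub_mul_exp_le_mul_log_div {q w : ℝ} (c : ℝ) (hq : 0 ≤ q) (hw : 0 ≤ w)
    (hqw : 0 < q → 0 < w) :
    q * (c + 1) - w * exp c ≤ q * log (q / w) := by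
  rcases hq.eq_or_lt with rfl | hq
  · simpa using mul_nonneg hw (exp_pos c).le
  · have hw := hqw hq
    have key := mul_le_mul_of_nonneg_left (add_one_le_exp (c - log (q / w))) hq.le
    rw [exp_sub, exp_log (by positivity)] at key
    have hrhs : q * (exp c / (q / w)) = w * exp c := by field_simp
    linarith

lemma log_le_div_add_log_sub_one {z a : ℝ} (hz : 0 < z) (ha : 0 < a) :
    log z ≤ z / a + log a - 1 := by
  have h := log_le_sub_one_of_pos (div_pos hz ha)
  rw [log_div hz.ne' ha.ne'] at h
  linarith

section PartitionFn

variable {Ω S U : Type*} [MeasurableSpace Ω] [Fintype S]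

noncomputable def partitionFn (ν : Measure Ω) (Y : Ω → S) (f : U → S → ℝ) (u : U) : ℝ :=
  ∑ s, ν.real (Y ⁻¹' {s}) * exp (f u s)

lemma partitionFn_pos [MeasurableSpace S] [MeasurableSingletonClass S]
    (ν : Measure Ω) [IsProbabilityMeasure ν] {Y : Ω → S} (hY : Measurable Y)
    (f : U → S → ℝ) (u : U) : 0 < partitionFn ν Y f u := by
  obtain ⟨s, -, hs⟩ : ∃ s ∈ univ, (0 : ℝ) < ν.real (Y ⁻¹' {s}) :=
    exists_lt_of_sum_lt (by simp [sum_measureReal_preimage_singleton_eq_one ν hY])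
  exact sum_pos' (fun s _ => by positivity) ⟨s, mem_univ s, by positivity⟩

end PartitionFn

section Bounds

variable {Ω S U : Type*} [MeasurableSpace Ω] [Fintype S] [Fintype U]

noncomputable def ubaBound (ν : Measure Ω) (X : Ω → U) (Y : Ω → S) (f : U → S → ℝ) : ℝ :=
  ∑ u, ∑ s, ν.real (X ⁻¹' {u} ∩ Y ⁻¹' {s}) * f u s -
    ∑ u, ν.real (X ⁻¹' {u}) * log (partitionFn ν Y f u)

noncomputable def tubaBound (ν : Measure Ω) (X : Ω → U) (Y : Ω → S) (f : U → S → ℝ)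
    (a : U → ℝ) : ℝ :=
  1 + ∑ u, ∑ s, ν.real (X ⁻¹' {u} ∩ Y ⁻¹' {s}) * (f u s - log (a u)) -
    ∑ u, ν.real (X ⁻¹' {u}) * (partitionFn ν Y f u / a u)

variable [MeasurableSpace S] [MeasurableSingletonClass S]
variable [MeasurableSpace U] [MeasurableSingletonClass U]

theorem ubaBound_le_mutualInfo (ν : Measure Ω) [IsProbabilityMeasure ν] {X : Ω → U} {Y : Ω → S}
    (hX : Measurable X) (hY : Measurable Y) (f : U → S → ℝ) :
    ubaBound ν X Y f ≤ mutualInfo ν X Y := by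
  set q := fun u s => ν.real (X ⁻¹' {u} ∩ Y ⁻¹' {s})
  set Z := partitionFn ν Y f
  have hZ : ∀ u, 0 < Z u := partitionFn_pos ν hY f
  have hq : ∑ u, ∑ s, q u s = 1 := by
    simp only [q, sum_measureReal_inter_preimage_singleton ν hY,
      sum_measureReal_preimage_singleton_eq_one ν hX]
  have hqZ : ∑ u, ∑ s, q u s * log (Z u) = ∑ u, ν.real (X ⁻¹' {u}) * log (Z u) := by
    simp only [q, ← sum_mul, sum_measureReal_inter_preimage_singleton ν hY]
  have hexp :
      ∑ u, ∑ s, ν.real (X ⁻¹' {u}) * ν.real (Y ⁻¹' {s}) * exp (f u s - log (Z u)) = 1 := by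
    have hu : ∀ u, ∑ s, ν.real (X ⁻¹' {u}) * ν.real (Y ⁻¹' {s}) * exp (f u s - log (Z u)) =
        ν.real (X ⁻¹' {u}) := by
      intro u
      simp only [exp_sub, exp_log (hZ u), mul_assoc, ← mul_div_assoc, ← sum_div, ← mul_sum]
      exact mul_div_cancel_right₀ _ (hZ u).ne'
    simp only [hu, sum_measureReal_preimage_singleton_eq_one ν hX]
  calc ubaBound ν X Y f
      = ∑ u, ∑ s, (q u s * ((f u s - log (Z u)) + 1) -
          ν.real (X ⁻¹' {u}) * ν.real (Y ⁻¹' {s}) * exp (f u s - log (Z u))) := by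
        simp only [ubaBound, mul_add, mul_sub, mul_one, sum_add_distrib, sum_sub_distrib] at hexp ⊢
        rw [hexp, hq, hqZ]
        ring
    _ ≤ ∑ u, ∑ s, q u s * log (q u s / (ν.real (X ⁻¹' {u}) * ν.real (Y ⁻¹' {s}))) := by
        gcongr with u _ s _
        refine mul_add_one_sub_mul_exp_le_mul_log_div _ measureReal_nonneg (by positivity)
          fun h => mul_pos ?_ ?_
        · exact h.trans_le (measureReal_mono Set.inter_subset_left)
        · exact h.trans_le (measureReal_mono Set.inter_subset_right)
    _ = mutualInfo ν X Y := (mutualInfo_eq_sum_mul_log_div ν hX hY).symm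

theorem tubaBound_le_ubaBound (ν : Measure Ω) [IsProbabilityMeasure ν] {X : Ω → U} {Y : Ω → S}
    (hX : Measurable X) (hY : Measurable Y) (f : U → S → ℝ) {a : U → ℝ} (ha : ∀ u, 0 < a u) :
    tubaBound ν X Y f a ≤ ubaBound ν X Y f := by
  have hlogZ : ∑ u, ν.real (X ⁻¹' {u}) * log (partitionFn ν Y f u) ≤
      ∑ u, ν.real (X ⁻¹' {u}) * (partitionFn ν Y f u / a u + log (a u) - 1) := by
    gcongr with u _
    exact log_le_div_add_log_sub_one (partitionFn_pos ν hY f u) (ha u)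
  have hloga : ∑ u, ∑ s, ν.real (X ⁻¹' {u} ∩ Y ⁻¹' {s}) * log (a u) =
      ∑ u, ν.real (X ⁻¹' {u}) * log (a u) := by
    simp only [← sum_mul, sum_measureReal_inter_preimage_singleton ν hY]
  have hX1 := sum_measureReal_preimage_singleton_eq_one ν hX
  simp only [tubaBound, ubaBound, mul_sub, mul_add, mul_one, sum_sub_distrib,
    sum_add_distrib] at hlogZ hloga ⊢
  linarith

end Bounds

section Conditioning

variable {Ω : Type*} [MeasurableSpace Ω] {μ : Measure Ω} {A : Set Ω}

lemma cond_real_apply (hA : MeasurableSet A) (E : Set Ω) :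
    (μ[|A]).real E = μ.real (A ∩ E) / μ.real A := by
  rw [measureReal_def, cond_apply hA, ENNReal.toReal_mul, ENNReal.toReal_inv, div_eq_inv_mul]
  rfl

lemma measureReal_mul_cond_real [IsFiniteMeasure μ] (hA : MeasurableSet A) (E : Set Ω) :
    μ.real A * (μ[|A]).real E = μ.real (A ∩ E) := by
  rw [measureReal_def, measureReal_def, measureReal_def, ← ENNReal.toReal_mul, mul_comm,
    cond_mul_eq_inter hA]

variable {S U : Type*} [Fintype S] [Fintype U]

lemma measureReal_mul_tubaBound_cond [IsFiniteMeasure μ] (hA : MeasurableSet A) (X : Ω → U)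
    (Y : Ω → S) (f : U → S → ℝ) (a : U → ℝ) :
    μ.real A * tubaBound μ[|A] X Y f a =
      μ.real A + ∑ u, ∑ s, μ.real (A ∩ X ⁻¹' {u} ∩ Y ⁻¹' {s}) * (f u s - log (a u)) -
        ∑ u, μ.real (A ∩ X ⁻¹' {u}) *
          ((∑ s, μ.real (A ∩ Y ⁻¹' {s}) / μ.real A * exp (f u s)) / a u) := by
  simp only [tubaBound, mul_add, mul_sub, mul_one, mul_sum, ← mul_assoc,
    measureReal_mul_cond_real hA, Set.inter_assoc]
  simp only [partitionFn, cond_real_apply hA]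

variable [MeasurableSpace S] [MeasurableSingletonClass S]
  [MeasurableSpace U] [MeasurableSingletonClass U]

lemma measureReal_mul_tubaBound_cond_le [IsFiniteMeasure μ]
    {X : Ω → U} {Y : Ω → S} (hX : Measurable X) (hY : Measurable Y) (f : U → S → ℝ)
    {a : U → ℝ} (ha : ∀ u, 0 < a u) :
    μ.real A * tubaBound μ[|A] X Y f a ≤ μ.real A * mutualInfo μ[|A] X Y := by
  by_cases hμA : μ A = 0
  · simp [measureReal_def, hμA]
  · have := cond_isProbabilityMeasure (μ := μ) hμA
    gcongr
    exact (tubaBound_le_ubaBound _ hX hY f ha).trans (ubaBound_le_mutualInfo _ hX hY f)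

end Conditioning

open scoped Classical in
/-- tractable unnormalized Barber–Agakov (TUBA) bound, with critic `𝓔`,
partition function `Z(t,u) = Σ_s P(Y=s | B=t) · exp(𝓔 t u s)` and positive baseline `a`. -/
theorem tuba_lower_bound
    {Ω S T U : Type*} [MeasurableSpace Ω]
    [Fintype S] [MeasurableSpace S] [DiscreteMeasurableSpace S]
    [Fintype T] [MeasurableSpace T] [DiscreteMeasurableSpace T]
    [Fintype U] [MeasurableSpace U] [DiscreteMeasurableSpace U]
    (μ : Measure Ω) [IsProbabilityMeasure μ]
    (Y : Ω → S) (B : Ω → T) (O : Ω → U)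
    (hY : Measurable Y) (hB : Measurable B) (hO : Measurable O)
    (𝓔 : T → U → S → ℝ)
    (a : T → U → ℝ) (ha : ∀ t u, 0 < a t u) :
    condMutualInfo μ O Y B ≥
      1 +
      (∑ x : T × U × S,
        (μ (B ⁻¹' {x.1} ∩ O ⁻¹' {x.2.1} ∩ Y ⁻¹' {x.2.2})).toReal *
          (𝓔 x.1 x.2.1 x.2.2 - Real.log (a x.1 x.2.1))) -
      ∑ tu ∈ Finset.univ.filter
          (fun tu : T × U => 0 < (μ (B ⁻¹' {tu.1} ∩ O ⁻¹' {tu.2})).toReal),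
        (μ (B ⁻¹' {tu.1} ∩ O ⁻¹' {tu.2})).toReal *
          ((∑ s : S,
            ((μ (B ⁻¹' {tu.1} ∩ Y ⁻¹' {s})).toReal / (μ (B ⁻¹' {tu.1})).toReal) *
              Real.exp (𝓔 tu.1 tu.2 s)) / a tu.1 tu.2) := by
  have htotal : ∑ t, μ.real (B ⁻¹' {t}) = 1 := sum_measureReal_preimage_singleton_eq_one μ hB
  calc condMutualInfo μ O Y B
      = ∑ t, μ.real (B ⁻¹' {t}) * mutualInfo μ[|B ⁻¹' {t}] O Y := rfl
    _ ≥ ∑ t, μ.real (B ⁻¹' {t}) * tubaBound μ[|B ⁻¹' {t}] O Y (𝓔 t) (a t) :=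
        sum_le_sum fun t _ => measureReal_mul_tubaBound_cond_le hO hY (𝓔 t) (ha t)
    _ = _ := by
        rw [sum_filter_of_ne]
        · simp only [measureReal_mul_tubaBound_cond (hB (measurableSet_singleton _)),
            sum_add_distrib, sum_sub_distrib, htotal, Fintype.sum_prod_type]
          rfl
        · exact fun tu _ h => ENNReal.toReal_nonneg.lt_of_ne (left_ne_zero_of_mul h).symm
end
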